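/- Let k ≥ 5 be an integer, K := k - 3, and let φ be a satisfiable E3-CNF formula with m clauses C_1, …, C_m over variables x_1, …, x_n. Let y_1, …, y_K be fresh variables and, for i ∈ [K], let H_i be the Horn clause over y_1,…,y_K whose only positive literal is y_i, i.e., H_i = ¬y_1 ∨ ⋯ ∨ ¬y_{i-1} ∨ y_i ∨ ¬y_{i+1} ∨ ⋯ ∨ ¬y_K. Let ψ be the Ek-CNF formula consisting of the K·m clauses C_j ∨ H_i for j ∈ [m], i ∈ [K], and let α_start be the all-ones assignment and α_end the all-zeros assignment over the n+K variables. Then α_start and α_end satisfy ψ, and if φ is satisfiable then opt_ψ(α_start ↔ α_end) = 1. -/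

import Mathlib

/-- An assignment maps each Boolean variable to a truth value. -/
abbrev Assignment (V : Type) := V → Bool

/-- A literal is a variable together with a polarity (`true` = positive);
a clause is a disjunction of literals, represented as the list of its literals
(its width is the length of this list). -/
abbrev Clause (V : Type) := List (V × Bool)

/-- A CNF formula is a conjunction of clauses, represented as a list
(clauses are counted with multiplicity). -/
abbrev CNF (V : Type) := List (Clause V)

/-- An assignment satisfies a clause if it makes at least one literal true. -/
def satClause {V : Type} (α : Assignment V) (C : Clause V) : Bool :=
  C.any fun l => α l.1 == l.2

/-- An assignment satisfies a CNF formula if it satisfies every clause. -/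
def satCNF {V : Type} (α : Assignment V) (φ : CNF V) : Bool :=
  φ.all fun C => satClause α C

/-- The fraction of clauses of `φ` satisfied by `α`. -/
noncomputable def val {V : Type} (φ : CNF V) (α : Assignment V) : ℝ :=
  ((φ.filter fun C => satClause α C).length : ℝ) / (φ.length : ℝ)

/-- The number of clauses of `φ` violated by `α`. -/
def numViol {V : Type} (φ : CNF V) (α : Assignment V) : ℕ :=
  (φ.filter fun C => !satClause α C).length

/-- Two assignments differ on at most one variable. -/
def Adjacent {V : Type} (α β : Assignment V) : Prop :=
  ∀ v w, α v ≠ β v → α w ≠ β w → v = w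

/-- `seq` is a reconfiguration sequence from `s` to `e`: a nonempty finite sequence of
assignments starting at `s`, ending at `e`, in which consecutive assignments differ
on at most one variable. -/
def IsReconfSeq {V : Type} (s e : Assignment V) (seq : List (Assignment V)) : Prop :=
  seq ≠ [] ∧ seq.head? = some s ∧ seq.getLast? = some e ∧ seq.Chain' Adjacent

/-- The value of a reconfiguration sequence: the minimum of `val φ` over its members. -/
noncomputable def seqVal {V : Type} (φ : CNF V) (seq : List (Assignment V)) : ℝ :=
  sInf (val φ '' {α | α ∈ seq})

/-- `opt_φ(s ↔ e)`: the optimal (maximum) value over all reconfiguration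
sequences from `s` to `e`. -/
noncomputable def optVal {V : Type} (φ : CNF V) (s e : Assignment V) : ℝ :=
  sSup (seqVal φ '' {seq | IsReconfSeq s e seq})

/-!
Walk from all-ones to all-zeros in three phases: move `x` to a satisfying assignment `α` of
`φ` while every `y_i = 1` (each Horn clause `H_i` holds through `y_i`); lower the `y`'s while
`x = α` (each `C_j` holds); finally lower `x` while every `y_i = 0`, which satisfies each `H_i`
through a negative literal `¬y_t`, `t ≠ i`, available since `K ≥ 2`. Every clause stays
satisfied throughout, so the walk has value 1.
-/

section Reconfiguration

variable {V : Type}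

theorem Adjacent.refl (α : Assignment V) : Adjacent α α :=
  fun _ _ h => absurd rfl h

theorem adjacent_update [DecidableEq V] (α : Assignment V) (v : V) (b : Bool) :
    Adjacent α (Function.update α v b) := by
  have hchanged : ∀ w, α w ≠ Function.update α v b w → w = v := fun w hw => by
    by_contra hwv
    exact hw (Function.update_of_ne hwv b α).symm
  intro w w' hw hw'
  rw [hchanged w hw, hchanged w' hw']

theorem IsReconfSeq.singleton (α : Assignment V) : IsReconfSeq α α [α] :=
  ⟨List.cons_ne_nil _ _, rfl, rfl, List.isChain_singleton α⟩

theorem IsReconfSeq.cons {s s' e : Assignment V} {seq : List (Assignment V)}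
    (h : IsReconfSeq s' e seq) (hadj : Adjacent s s') : IsReconfSeq s e (s :: seq) := by
  obtain ⟨hne, hhead, hlast, hchain⟩ := h
  obtain ⟨a, t, rfl⟩ := List.exists_cons_of_ne_nil hne
  obtain rfl : a = s' := Option.some_injective _ hhead
  exact ⟨List.cons_ne_nil _ _, rfl, by simpa using hlast, hchain.cons_cons hadj⟩

theorem IsReconfSeq.append {s m e : Assignment V} {seq₁ seq₂ : List (Assignment V)}
    (h₁ : IsReconfSeq s m seq₁) (h₂ : IsReconfSeq m e seq₂) :
    IsReconfSeq s e (seq₁ ++ seq₂) := by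
  obtain ⟨hne₁, hhead₁, hlast₁, hchain₁⟩ := h₁
  obtain ⟨hne₂, hhead₂, hlast₂, hchain₂⟩ := h₂
  refine ⟨by simp [hne₁], by simp [hhead₁], by simp [hlast₂], hchain₁.append hchain₂ ?_⟩
  simp only [hlast₁, hhead₂, Option.mem_some_iff]
  rintro _ rfl _ rfl
  exact Adjacent.refl m

theorem exists_reconfSeq_between_of_list [DecidableEq V] (e : Assignment V) (l : List V)
    (s : Assignment V) (hs : ∀ v, s v ≠ e v → v ∈ l) :
    ∃ seq, IsReconfSeq s e seq ∧ ∀ β ∈ seq, ∀ v, β v = s v ∨ β v = e v := by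
  induction l generalizing s with
  | nil =>
    obtain rfl : s = e := funext fun v => by simpa using hs v
    exact ⟨[s], .singleton s, by simp⟩
  | cons v l ih =>
    set s' := Function.update s v (e v)
    have hs' : ∀ w, s' w ≠ e w → w ∈ l := fun w hw => by
      by_cases hwv : w = v
      · subst hwv; simp [s'] at hw
      · rw [show s' w = s w from Function.update_of_ne hwv _ _] at hw
        simpa [hwv] using hs w hw
    obtain ⟨seq, hseq, hbetween⟩ := ih s' hs'
    refine ⟨s :: seq, hseq.cons (adjacent_update s v (e v)), ?_⟩
    rintro β (_ | ⟨_, hβ⟩) w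
    · exact Or.inl rfl
    · rcases hbetween β hβ w with h | h
      · rw [h]
        by_cases hwv : w = v
        · subst hwv; simp [s']
        · simp [s', Function.update_of_ne hwv]
      · exact Or.inr h

theorem exists_reconfSeq_between (s e : Assignment V) (hfin : {v | s v ≠ e v}.Finite) :
    ∃ seq, IsReconfSeq s e seq ∧ ∀ β ∈ seq, ∀ v, β v = s v ∨ β v = e v := by
  classical
  exact exists_reconfSeq_between_of_list e hfin.toFinset.toList s (by simp)

end Reconfiguration

section Value

variable {V : Type} (φ : CNF V)

theorem val_eq_one_of_satCNF (hφ : φ ≠ []) {α : Assignment V} (h : satCNF α φ) :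
    val φ α = 1 := by
  rw [val, List.filter_eq_self.mpr (List.all_eq_true.mp h)]
  exact div_self (by simpa using hφ)

theorem val_nonneg (α : Assignment V) : 0 ≤ val φ α := by
  rw [val]; positivity

theorem val_le_one (α : Assignment V) : val φ α ≤ 1 := by
  rw [val]
  exact div_le_one_of_le₀ (by exact_mod_cast List.length_filter_le _ _) (by positivity)

theorem seqVal_le_one (seq : List (Assignment V)) : seqVal φ seq ≤ 1 := by
  rcases seq with _ | ⟨α, seq⟩
  · simp [seqVal]
  · have hbdd : BddBelow (val φ '' {β | β ∈ α :: seq}) := ⟨0, by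
      rintro _ ⟨β, -, rfl⟩
      exact val_nonneg φ β⟩
    exact (csInf_le hbdd ⟨α, List.mem_cons_self, rfl⟩).trans (val_le_one φ α)

theorem seqVal_eq_one (hφ : φ ≠ []) {seq : List (Assignment V)} (hseq : seq ≠ [])
    (hsat : ∀ β ∈ seq, satCNF β φ) : seqVal φ seq = 1 := by
  obtain ⟨α, hα⟩ := List.exists_mem_of_ne_nil seq hseq
  have himage : val φ '' {β | β ∈ seq} = {1} := by
    refine Set.eq_singleton_iff_unique_mem.mpr ⟨⟨α, hα, val_eq_one_of_satCNF φ hφ (hsat α hα)⟩, ?_⟩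
    rintro _ ⟨β, hβ, rfl⟩
    exact val_eq_one_of_satCNF φ hφ (hsat β hβ)
  rw [seqVal, himage, csInf_singleton]

theorem optVal_eq_one_of_reconfSeq (hφ : φ ≠ []) {s e : Assignment V}
    {seq : List (Assignment V)} (hseq : IsReconfSeq s e seq) (hsat : ∀ β ∈ seq, satCNF β φ) :
    optVal φ s e = 1 := by
  have hmem : 1 ∈ seqVal φ '' {seq | IsReconfSeq s e seq} :=
    ⟨seq, hseq, seqVal_eq_one φ hφ hseq.1 hsat⟩
  have hbound : ∀ x ∈ seqVal φ '' {seq | IsReconfSeq s e seq}, x ≤ 1 := by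
    rintro _ ⟨seq', -, rfl⟩
    exact seqVal_le_one φ seq'
  exact le_antisymm (csSup_le ⟨1, hmem⟩ hbound) (le_csSup ⟨1, hbound⟩ hmem)

end Value

section HornLift

variable {V : Type} {K : ℕ}

/-- The clause `C ∨ H_i`: the literal on `y_t` has polarity `t == i`. -/
def liftClause (C : Clause V) (i : Fin K) : Clause (V ⊕ Fin K) :=
  C.map (fun l => (Sum.inl l.1, l.2)) ++ List.ofFn fun t => (Sum.inr t, t == i)

def hornLift (φ : CNF V) (K : ℕ) : CNF (V ⊕ Fin K) :=
  φ.flatMap fun C => (List.finRange K).map (liftClause C)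

theorem hornLift_ne_nil {φ : CNF V} (hφ : φ ≠ []) (hK : 0 < K) : hornLift φ K ≠ [] := by
  obtain ⟨C, hC⟩ := List.exists_mem_of_ne_nil φ hφ
  exact List.ne_nil_of_mem (List.mem_flatMap.mpr
    ⟨C, hC, List.mem_map_of_mem (List.mem_finRange ⟨0, hK⟩)⟩)

theorem satCNF_hornLift_iff (β : Assignment (V ⊕ Fin K)) (φ : CNF V) :
    satCNF β (hornLift φ K) ↔ ∀ C ∈ φ, ∀ i, satClause β (liftClause C i) := by
  simp [satCNF, hornLift]

theorem satClause_liftClause_of_inr {β : Assignment (V ⊕ Fin K)} (C : Clause V) {i t : Fin K}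
    (ht : β (Sum.inr t) = (t == i)) : satClause β (liftClause C i) := by
  refine List.any_eq_true.mpr ⟨(Sum.inr t, t == i), ?_, by simp [ht]⟩
  exact List.mem_append_right _ (List.mem_ofFn.mpr ⟨t, rfl⟩)

theorem satCNF_hornLift_of_inr_eq_true {β : Assignment (V ⊕ Fin K)} (φ : CNF V)
    (hβ : ∀ t, β (Sum.inr t) = true) : satCNF β (hornLift φ K) :=
  (satCNF_hornLift_iff β φ).mpr fun C _ i => satClause_liftClause_of_inr C (t := i) (by simp [hβ])

theorem satCNF_hornLift_of_inr_eq_false {β : Assignment (V ⊕ Fin K)} (hK : 2 ≤ K) (φ : CNF V)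
    (hβ : ∀ t, β (Sum.inr t) = false) : satCNF β (hornLift φ K) := by
  refine (satCNF_hornLift_iff β φ).mpr fun C _ i => ?_
  have : Nontrivial (Fin K) := Fin.nontrivial_iff_two_le.mpr hK
  obtain ⟨t, hti⟩ := exists_ne i
  exact satClause_liftClause_of_inr C (t := t) (by simp [hβ, hti])

theorem satCNF_hornLift_of_inl {α : Assignment V} {φ : CNF V} (hα : satCNF α φ)
    {β : Assignment (V ⊕ Fin K)} (hβ : ∀ v, β (Sum.inl v) = α v) :
    satCNF β (hornLift φ K) := by
  refine (satCNF_hornLift_iff β φ).mpr fun C hC i => ?_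
  obtain ⟨l, hl, hsat⟩ := List.any_eq_true.mp (List.all_eq_true.mp hα C hC)
  refine List.any_eq_true.mpr ⟨(Sum.inl l.1, l.2), ?_, by simpa [hβ] using hsat⟩
  exact List.mem_append_left _ (List.mem_map_of_mem hl)

end HornLift

theorem stmt11_general {n k : ℕ} (hk : 5 ≤ k) (φ : CNF (Fin n)) (hφ : 1 ≤ φ.length)
    (ψ : CNF (Fin n ⊕ Fin (k - 3)))
    (hψ : ψ = φ.flatMap fun C =>
        (List.finRange (k - 3)).map fun i =>
          C.map (fun l => (Sum.inl l.1, l.2)) ++ List.ofFn fun t => (Sum.inr t, t == i))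
    (αs αe : Assignment (Fin n ⊕ Fin (k - 3)))
    (hαs : αs = fun _ => true) (hαe : αe = fun _ => false) :
    satCNF αs ψ ∧ satCNF αe ψ ∧ ((∃ α, satCNF α φ) → optVal ψ αs αe = 1) := by
  change ψ = hornLift φ (k - 3) at hψ
  subst hψ hαs hαe
  have hK : 2 ≤ k - 3 := by omega
  refine ⟨satCNF_hornLift_of_inr_eq_true φ fun _ => rfl,
    satCNF_hornLift_of_inr_eq_false hK φ fun _ => rfl, ?_⟩
  rintro ⟨α, hα⟩
  let mid₁ : Assignment (Fin n ⊕ Fin (k - 3)) := Sum.elim α fun _ => true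
  let mid₂ : Assignment (Fin n ⊕ Fin (k - 3)) := Sum.elim α fun _ => false
  obtain ⟨seq₁, hseq₁, hbetween₁⟩ :=
    exists_reconfSeq_between (fun _ => true) mid₁ (Set.toFinite _)
  obtain ⟨seq₂, hseq₂, hbetween₂⟩ := exists_reconfSeq_between mid₁ mid₂ (Set.toFinite _)
  obtain ⟨seq₃, hseq₃, hbetween₃⟩ :=
    exists_reconfSeq_between mid₂ (fun _ => false) (Set.toFinite _)
  refine optVal_eq_one_of_reconfSeq _ (hornLift_ne_nil (List.ne_nil_of_length_pos hφ) (by omega))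
    ((hseq₁.append hseq₂).append hseq₃) ?_
  simp only [List.mem_append]
  rintro β ((hβ | hβ) | hβ)
  · exact satCNF_hornLift_of_inr_eq_true φ fun t => by simpa [mid₁] using hbetween₁ β hβ (.inr t)
  · exact satCNF_hornLift_of_inl hα fun v => by simpa [mid₁, mid₂] using hbetween₂ β hβ (.inl v)
  · exact satCNF_hornLift_of_inr_eq_false hK φ fun t => by
      simpa [mid₂] using hbetween₃ β hβ (.inr t)

/-- Completeness of the Horn-clause reduction (`k ≥ 5`, `K := k - 3`):
`ψ` consists of the `K·m` clauses `C_j ∨ H_i` where `H_i` is the Horn clause over the fresh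
variables `y₁, …, y_K` whose only positive literal is `y_i`; `αs` is the all-ones assignment
and `αe` the all-zeros assignment on the `n + K` variables. Then `αs` and `αe` satisfy `ψ`,
and if `φ` is satisfiable then `opt_ψ(αs ↔ αe) = 1`. -/
theorem stmt11 {n k : ℕ} (hk : 5 ≤ k) (φ : CNF (Fin n)) (hφ : 1 ≤ φ.length)
    (h3 : ∀ C ∈ φ, C.length = 3)
    (ψ : CNF (Fin n ⊕ Fin (k - 3)))
    (hψ : ψ = φ.flatMap fun C =>
        (List.finRange (k - 3)).map fun i =>
          C.map (fun l => (Sum.inl l.1, l.2)) ++ List.ofFn fun t => (Sum.inr t, t == i))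
    (αs αe : Assignment (Fin n ⊕ Fin (k - 3)))
    (hαs : αs = fun _ => true) (hαe : αe = fun _ => false) :
    satCNF αs ψ ∧ satCNF αe ψ ∧ ((∃ α, satCNF α φ) → optVal ψ αs αe = 1) :=
  stmt11_general hk φ hφ ψ hψ αs αe hαs hαe
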